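/- Let p be a prime, n ≥ 4 an integer with p > n, and let m be an integer with 1 < m < p. Let A be the set of residues {i mod p : 1 ≤ i ≤ ⌊(p-1)/n⌋} in F_p, and assume A is nonempty (equivalently p - 1 ≥ n). Then multiplication by m in F_p* does not map A into A; that is, there exists a ∈ A with m·a ∉ A. -/

import Mathlib

/-!
Write `k = ⌊(p-1)/n⌋`, so `A` is the image of `1, …, k` and `2k < p`. The element
`a = ⌊k/m⌋ + 1` lies in `[1, k]`, while `m a` lies in `(k, max(m, 2k)]`; as this interval
contains no multiple of `p` and misses `[1, k]`, the residue of `m a` is not in `A`.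
-/

open Finset

theorem exists_mem_Icc_lt_mul_le_max {k m : ℕ} (hk : 1 ≤ k) (hm : 1 < m) :
    ∃ a ∈ Icc 1 k, k < m * a ∧ m * a ≤ max m (2 * k) := by
  refine ⟨k / m + 1, mem_Icc.mpr ⟨le_add_self, Nat.div_lt_self hk hm⟩,
    Nat.lt_mul_div_succ k (by omega), ?_⟩
  rcases lt_or_ge k m with hkm | hmk
  · simp [Nat.div_eq_of_lt hkm]
  · have := Nat.mul_div_le k m
    rw [mul_add, mul_one]
    omega

theorem ZMod.natCast_mem_image_Icc_iff {p k x : ℕ} (hk : k < p) (hx : x < p) :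
    (x : ZMod p) ∈ (Icc 1 k).image (fun i : ℕ => (i : ZMod p)) ↔ x ∈ Icc 1 k := by
  refine ⟨fun hmem => ?_, mem_image_of_mem _⟩
  obtain ⟨i, hi, hix⟩ := mem_image.mp hmem
  rw [ZMod.natCast_eq_natCast_iff', Nat.mod_eq_of_lt hx,
    Nat.mod_eq_of_lt ((mem_Icc.mp hi).2.trans_lt hk)] at hix
  exact hix ▸ hi

theorem stmt_7_general (p n m : ℕ) (hn : 4 ≤ n)
    (hm1 : 1 < m) (hm2 : m < p)
    (A : Finset (ZMod p)) (hA : A = (Finset.Icc 1 ((p - 1) / n)).image (fun i : ℕ => (i : ZMod p)))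
    (hne : A.Nonempty) :
    ∃ a ∈ A, (m : ZMod p) * a ∉ A := by
  set k := (p - 1) / n
  subst hA
  have hk : 1 ≤ k := by
    obtain ⟨x, hx⟩ := hne
    obtain ⟨i, hi, -⟩ := mem_image.mp hx
    exact (mem_Icc.mp hi).1.trans (mem_Icc.mp hi).2
  have h2k : 2 * k < p := by
    have : n * k ≤ p - 1 := Nat.mul_div_le (p - 1) n
    have : 2 * k ≤ n * k := Nat.mul_le_mul_right k (by omega)
    omega
  obtain ⟨a, ha, hka, hmax⟩ := exists_mem_Icc_lt_mul_le_max hk hm1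
  refine ⟨a, mem_image_of_mem _ ha, ?_⟩
  rw [← Nat.cast_mul, ZMod.natCast_mem_image_Icc_iff (by omega) (by omega), mem_Icc]
  omega

theorem stmt_7 (p n m : ℕ) (hp : p.Prime) (hn : 4 ≤ n) (hpn : n < p)
    (hm1 : 1 < m) (hm2 : m < p)
    (A : Finset (ZMod p)) (hA : A = (Finset.Icc 1 ((p - 1) / n)).image (fun i : ℕ => (i : ZMod p)))
    (hne : A.Nonempty) :
    ∃ a ∈ A, (m : ZMod p) * a ∉ A :=
  stmt_7_general p n m hn hm1 hm2 A hA hne
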